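/- arXiv:math/0611167 — 6 statements merged into one kernel-verified Lean document; each statement's English description precedes it below -/
import Mathlib

section
/- Let K be a field and let A be an n×n anti-symmetric matrix with entries in K. Then the rank of A is even. -/
/-! A nonzero alternating matrix has an entry `A i j ≠ 0` with `i ≠ j`, and its principal `2 × 2`
block on `{i, j}` has determinant `A i j ^ 2`, so it is invertible. Block elimination splits this
block off: the rank drops by exactly `2`, and the Schur complement `S` is again alternating because
alternating matrices are exactly those with `xᵀ A x = 0` for all `x`, while `yᵀ S y` is a value of
this quadratic form of the whole matrix. Induction on the size finishes the proof. -/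

theorem Submodule.finrank_prod {K V W : Type*} [Field K] [AddCommGroup V] [Module K V]
    [AddCommGroup W] [Module K W] (p : Submodule K V) (q : Submodule K W)
    [FiniteDimensional K p] [FiniteDimensional K q] :
    Module.finrank K (p.prod q) = Module.finrank K p + Module.finrank K q := by
  rw [← Module.finrank_prod, ← LinearMap.finrank_range_of_inj (f := p.subtype.prodMap q.subtype)
    (p.injective_subtype.prodMap q.injective_subtype),
    LinearMap.range_prodMap, Submodule.range_subtype, Submodule.range_subtype]

namespace Matrix

variable {m n K R : Type*}

def IsAlt [CommRing R] (A : Matrix n n R) : Prop :=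
  (∀ i, A i i = 0) ∧ ∀ i j, A i j + A j i = 0

section CommRing

variable [CommRing R]

theorem IsAlt.submatrix {A : Matrix n n R} (hA : A.IsAlt) (f : m → n) :
    (A.submatrix f f).IsAlt :=
  ⟨fun i => hA.1 (f i), fun i j => hA.2 (f i) (f j)⟩

theorem IsAlt.det_fin_two {A : Matrix (Fin 2) (Fin 2) R} (hA : A.IsAlt) :
    A.det = A 0 1 ^ 2 := by
  rw [Matrix.det_fin_two, hA.1 0, eq_neg_of_add_eq_zero_right (hA.2 0 1)]
  ring

theorem isAlt_iff_dotProduct_mulVec_self [Fintype n] [DecidableEq n] {A : Matrix n n R} :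
    A.IsAlt ↔ ∀ x, x ⬝ᵥ A *ᵥ x = 0 := by
  constructor
  · rintro ⟨hdiag, hskew⟩ x
    have hsum : x ⬝ᵥ A *ᵥ x = ∑ p : n × n, x p.1 * A p.1 p.2 * x p.2 := by
      simp only [dotProduct, mulVec, Finset.mul_sum, mul_assoc, ← Fintype.sum_prod_type']
    rw [hsum]
    -- the terms at `(i, j)` and `(j, i)` cancel, and the diagonal terms vanish
    refine Finset.sum_ninvolution Prod.swap (fun p => ?_) (fun p hp hfix => ?_) (by simp) (by simp)
    · simp only [Prod.fst_swap, Prod.snd_swap]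
      linear_combination x p.1 * x p.2 * hskew p.1 p.2
    · obtain ⟨i, j⟩ := p
      obtain rfl : i = j := congrArg Prod.fst hfix.symm
      simp [hdiag] at hp
  · intro h
    have hdiag : ∀ i, A i i = 0 := fun i => by simpa using h (Pi.single i 1)
    refine ⟨hdiag, fun i j => ?_⟩
    have hij := h (Pi.single i 1 + Pi.single j 1)
    rw [mulVec_add, dotProduct_add, add_dotProduct, add_dotProduct] at hij
    rw [add_comm]
    simpa [hdiag] using hij

theorem IsAlt.schur_complement [Fintype m] [Fintype n] [DecidableEq m] [DecidableEq n]
    {A : Matrix m m R} {B : Matrix m n R} {C : Matrix n m R} {D : Matrix n n R} [Invertible A]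
    (h : (fromBlocks A B C D).IsAlt) : (D - C * ⅟A * B).IsAlt := by
  rw [isAlt_iff_dotProduct_mulVec_self] at h ⊢
  intro y
  have hx := h (Sum.elim (-((⅟A * B) *ᵥ y)) y)
  have hA : A *ᵥ -((⅟A * B) *ᵥ y) + B *ᵥ y = 0 := by
    rw [mulVec_neg, mulVec_mulVec, Matrix.mul_invOf_cancel_left, neg_add_cancel]
  have hD : C *ᵥ -((⅟A * B) *ᵥ y) + D *ᵥ y = (D - C * ⅟A * B) *ᵥ y := by
    rw [sub_mulVec, mulVec_neg, mulVec_mulVec, Matrix.mul_assoc, neg_add_eq_sub]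
  rwa [fromBlocks_mulVec, Sum.elim_comp_inl, Sum.elim_comp_inr, hA, hD,
    sumElim_dotProduct_sumElim, dotProduct_zero, zero_add] at hx

end CommRing

variable [Field K]

theorem rank_fromBlocks_zero_zero {m₁ m₂ n₁ n₂ : Type*} [Fintype n₁] [Fintype n₂]
    (A : Matrix m₁ n₁ K) (D : Matrix m₂ n₂ K) :
    (fromBlocks A 0 0 D).rank = A.rank + D.rank := by
  have hf : (fromBlocks A 0 0 D).mulVecLin =
      (LinearEquiv.sumArrowLequivProdArrow m₁ m₂ K K).symm.toLinearMap ∘ₗ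
        A.mulVecLin.prodMap D.mulVecLin ∘ₗ
        (LinearEquiv.sumArrowLequivProdArrow n₁ n₂ K K).toLinearMap := by
    ext x (i | i) <;>
      simp [fromBlocks_mulVec, LinearEquiv.sumArrowLequivProdArrow, Equiv.sumArrowEquivProdArrow]
  rw [rank, hf, LinearMap.range_comp, LinearMap.range_comp_of_range_eq_top _ (LinearEquiv.range _),
    LinearEquiv.finrank_map_eq, LinearMap.range_prodMap, Submodule.finrank_prod]
  rfl

theorem rank_fromBlocks_of_invertible₁₁ [Fintype m] [Fintype n] [DecidableEq m] [DecidableEq n]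
    (A : Matrix m m K) (B : Matrix m n K) (C : Matrix n m K) (D : Matrix n n K) [Invertible A] :
    (fromBlocks A B C D).rank = Fintype.card m + (D - C * ⅟A * B).rank := by
  rw [fromBlocks_eq_of_invertible₁₁, rank_mul_eq_left_of_isUnit_det,
    rank_mul_eq_right_of_isUnit_det, rank_fromBlocks_zero_zero,
    rank_of_isUnit A (isUnit_of_invertible A)]
  · simp
  · simp

theorem IsAlt.exists_rank_eq_two_add [Fintype m] [DecidableEq m]
    {M : Matrix (Fin 2 ⊕ m) (Fin 2 ⊕ m) K} (hM : M.IsAlt) (h : M (.inl 0) (.inl 1) ≠ 0) :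
    ∃ S : Matrix m m K, S.IsAlt ∧ M.rank = 2 + S.rank := by
  have hB : M.toBlocks₁₁.IsAlt := hM.submatrix Sum.inl
  have hdet : IsUnit M.toBlocks₁₁.det := by
    rw [hB.det_fin_two]
    exact (pow_ne_zero 2 h).isUnit
  let := M.toBlocks₁₁.invertibleOfIsUnitDet hdet
  rw [← fromBlocks_toBlocks M] at hM ⊢
  exact ⟨_, hM.schur_complement, by rw [rank_fromBlocks_of_invertible₁₁, Fintype.card_fin]⟩

theorem IsAlt.even_rank [Fintype n] {A : Matrix n n K} (hA : A.IsAlt) : Even A.rank := by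
  classical
  induction h : Fintype.card n using Nat.strong_induction_on generalizing n with
  | _ N ih =>
  by_cases hA0 : A = 0
  · simp [hA0]
  obtain ⟨i, j, hij⟩ : ∃ i j, A i j ≠ 0 := by simpa [← Matrix.ext_iff] using hA0
  have hinj : Function.Injective ![i, j] := by
    have hne : i ≠ j := by rintro rfl; exact hij (hA.1 i)
    simp [Function.Injective, Fin.forall_fin_two, hne, hne.symm]
  let e : Fin 2 ⊕ ↥(Set.range ![i, j])ᶜ ≃ n :=
    ((Equiv.ofInjective _ hinj).sumCongr (Equiv.refl _)).trans (Equiv.Set.sumCompl _)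
  obtain ⟨S, hS, hrank⟩ := (hA.submatrix e).exists_rank_eq_two_add (by simpa [e] using hij)
  have hcard : 2 + Fintype.card ↥(Set.range ![i, j])ᶜ = N := by
    rw [← h, ← Fintype.card_fin 2, ← Fintype.card_sum]
    exact Fintype.card_congr e
  rw [← rank_submatrix A e e, hrank]
  exact even_two.add (ih _ (by omega) hS rfl)

end Matrix

/-- An `n × n` matrix `A` over a commutative ring is *anti-symmetric* if
`A i i = 0` for all `i` and `A i j + A j i = 0` for all `i, j`.
The rank of an anti-symmetric matrix over a field is even. -/
theorem rank_even_of_antisymmetric {K : Type*} [Field K] {n : ℕ}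
    (A : Matrix (Fin n) (Fin n) K)
    (hdiag : ∀ i, A i i = 0)
    (hskew : ∀ i j, A i j + A j i = 0) :
    Even A.rank :=
  Matrix.IsAlt.even_rank ⟨hdiag, hskew⟩
end

section
/- Let n be even and let A be an n×n anti-symmetric matrix with entries in a commutative ring R. Then det A is a square in R, i.e., there exists f ∈ R with det A = f². -/
/-!
Over a field, pick a nonzero entry `a = A i j`, move `i, j` to the front and take the Schur
complement of the leading block `!![0, a; -a, 0]`: `det A = a ^ 2 * det S` with `S` again
alternating, of size two less. Over an arbitrary commutative ring, `A` is a specialization of the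
generic skew matrix `X i j - X j i` over `ℤ[X]`. Its determinant is a square in the fraction field,
hence in the integrally closed ring `ℤ[X]`, and the square root specializes.
-/

open MvPolynomial

def Equiv.finTwoSumComplPair {ι : Type*} [DecidableEq ι] {i j : ι} (hij : i ≠ j) :
    Fin 2 ⊕ {x // ¬(x = i ∨ x = j)} ≃ ι :=
  (Equiv.sumCongr
    { toFun := ![⟨i, .inl rfl⟩, ⟨j, .inr rfl⟩]
      invFun := fun x => if x.1 = i then 0 else 1
      left_inv := fun k => by fin_cases k <;> simp [hij.symm]
      right_inv := by rintro ⟨x, rfl | rfl⟩ <;> simp [hij.symm] }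
    (Equiv.refl _)).trans (Equiv.sumCompl fun x => x = i ∨ x = j)

theorem IsIntegrallyClosed.isSquare_of_isSquare_algebraMap {R K : Type*} [CommRing R] [CommRing K]
    [Algebra R K] [IsFractionRing R K] [IsIntegrallyClosed R] {x : R}
    (hx : IsSquare (algebraMap R K x)) : IsSquare x := by
  obtain ⟨g, hg⟩ := hx
  have hint : IsIntegral R (g ^ 2) := by
    rw [sq, ← hg]
    exact isIntegral_algebraMap
  obtain ⟨y, rfl⟩ := IsIntegrallyClosed.exists_algebraMap_eq_of_isIntegral_pow two_pos hint
  exact ⟨y, IsFractionRing.injective R K (by rw [hg, map_mul])⟩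

namespace Matrix

structure IsAlternating {n α : Type*} [Neg α] [Zero α] (A : Matrix n n α) : Prop where
  transpose_eq : Aᵀ = -A
  apply_self : ∀ i, A i i = 0

namespace IsAlternating

variable {m n α β : Type*}

theorem apply_swap [Neg α] [Zero α] {A : Matrix n n α} (hA : A.IsAlternating) (i j : n) :
    A j i = -A i j :=
  congrFun (congrFun hA.transpose_eq i) j

theorem submatrix [Neg α] [Zero α] {A : Matrix n n α} (hA : A.IsAlternating) (e : m → n) :
    (A.submatrix e e).IsAlternating where
  transpose_eq := by rw [transpose_submatrix, hA.transpose_eq]; rfl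
  apply_self i := hA.apply_self (e i)

theorem add [AddCommGroup α] {A B : Matrix n n α} (hA : A.IsAlternating) (hB : B.IsAlternating) :
    (A + B).IsAlternating where
  transpose_eq := by rw [transpose_add, hA.transpose_eq, hB.transpose_eq, neg_add]
  apply_self i := by simp [hA.apply_self, hB.apply_self]

theorem map [Ring α] [Ring β] {A : Matrix n n α} (hA : A.IsAlternating) (f : α →+* β) :
    (A.map f).IsAlternating where
  transpose_eq := by rw [← transpose_map, hA.transpose_eq, Matrix.map_neg _ (map_neg f)]
  apply_self i := by simp [hA.apply_self]

theorem dotProduct_mulVec_self [Fintype n] [CommRing α] {J : Matrix n n α}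
    (hJ : J.IsAlternating) (v : n → α) : v ⬝ᵥ J *ᵥ v = 0 := by
  simp only [dotProduct, mulVec, Finset.mul_sum, ← Finset.sum_product']
  -- the terms at `(a, b)` and `(b, a)` cancel, so no division by `2` is needed
  refine Finset.sum_involution (fun p _ => p.swap) (fun p _ => ?_) (fun p _ hp h => ?_)
    (fun _ _ => Finset.mem_univ _) (fun _ _ => rfl)
  · simp only [Prod.fst_swap, Prod.snd_swap, hJ.apply_swap p.1 p.2]; ring
  · obtain ⟨a, b⟩ := p
    obtain rfl : b = a := congrArg Prod.fst h
    simp [hJ.apply_self] at hp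

theorem mul_mul_transpose [Fintype n] [CommRing α] {J : Matrix n n α} (hJ : J.IsAlternating)
    (R : Matrix m n α) : (R * J * Rᵀ).IsAlternating where
  transpose_eq := by
    rw [transpose_mul, transpose_mul, transpose_transpose, hJ.transpose_eq, Matrix.neg_mul,
      Matrix.mul_neg, Matrix.mul_assoc]
  apply_self p := by
    rw [Matrix.mul_assoc, mul_apply]
    simpa [mul_apply, dotProduct, mulVec, Finset.mul_sum, mul_comm, mul_left_comm]
      using hJ.dotProduct_mulVec_self (R p)

theorem toBlocks₁₂_eq_neg_transpose [Neg α] [Zero α]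
    {C : Matrix (m ⊕ n) (m ⊕ n) α} (hC : C.IsAlternating) : C.toBlocks₁₂ = -C.toBlocks₂₁ᵀ := by
  ext i j
  exact congrFun (congrFun hC.transpose_eq (.inr j)) (.inl i)

theorem exists_det_eq_sq_mul_det [Field α] [Fintype m] [DecidableEq m]
    {C : Matrix (Fin 2 ⊕ m) (Fin 2 ⊕ m) α} (hC : C.IsAlternating) (ha : C (.inl 0) (.inl 1) ≠ 0) :
    ∃ S : Matrix m m α, S.IsAlternating ∧ C.det = C (.inl 0) (.inl 1) ^ 2 * S.det := by
  set a := C (.inl 0) (.inl 1)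
  have hP : C.toBlocks₁₁ = !![0, a; -a, 0] := by
    ext i j
    fin_cases i <;> fin_cases j <;> simp [toBlocks₁₁, hC.apply_self, hC.apply_swap _ (.inl 0), a]
  set J : Matrix (Fin 2) (Fin 2) α := !![0, -a⁻¹; a⁻¹, 0]
  have hJ : J.IsAlternating :=
    ⟨by ext i j; fin_cases i <;> fin_cases j <;> simp [J], fun i => by fin_cases i <;> simp [J]⟩
  have hPJ : C.toBlocks₁₁ * J = 1 := by
    rw [hP]; ext i j; fin_cases i <;> fin_cases j <;> simp [J, ha]
  have : Invertible C.toBlocks₁₁ := invertibleOfRightInverse _ J hPJ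
  refine ⟨C.toBlocks₂₂ + C.toBlocks₂₁ * J * C.toBlocks₂₁ᵀ,
    (hC.submatrix Sum.inr).add (hJ.mul_mul_transpose _), ?_⟩
  conv_lhs => rw [← fromBlocks_toBlocks C]
  rw [det_fromBlocks₁₁, invOf_eq_right_inv hPJ, hP, det_fin_two_of, hC.toBlocks₁₂_eq_neg_transpose,
    Matrix.mul_neg, sub_neg_eq_add]
  ring

theorem isSquare_det_of_field [Field α] [Fintype n] [DecidableEq n] {A : Matrix n n α}
    (hA : A.IsAlternating) (hn : Even (Fintype.card n)) : IsSquare A.det := by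
  obtain ⟨k, hk⟩ := hn
  induction k generalizing n with
  | zero =>
    have : IsEmpty n := Fintype.card_eq_zero_iff.mp hk
    simp
  | succ k ih =>
    by_cases hzero : A = 0
    · have : Nonempty n := Fintype.card_pos_iff.mp (by omega)
      simp [hzero]
    obtain ⟨i, j, hij⟩ : ∃ i j, A i j ≠ 0 := by
      by_contra! h
      exact hzero (ext h)
    have hne : i ≠ j := by rintro rfl; exact hij (hA.apply_self i)
    set e := Equiv.finTwoSumComplPair hne
    obtain ⟨S, hS, hdet⟩ := (hA.submatrix e).exists_det_eq_sq_mul_det hij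
    have hcard : Fintype.card {x // ¬(x = i ∨ x = j)} = k + k := by
      have := Fintype.card_congr e
      simp only [Fintype.card_sum, Fintype.card_fin] at this
      omega
    rw [← det_submatrix_equiv_self e, hdet]
    exact (IsSquare.sq _).mul (ih hS hcard)

end IsAlternating

noncomputable def genericSkew (n : Type*) : Matrix n n (MvPolynomial (n × n) ℤ) :=
  of fun i j => X (i, j) - X (j, i)

theorem isAlternating_genericSkew (n : Type*) : (genericSkew n).IsAlternating where
  transpose_eq := by ext i j; simp [genericSkew]
  apply_self i := sub_self _

theorem isSquare_det_genericSkew (n : Type*) [Fintype n] [DecidableEq n]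
    (hn : Even (Fintype.card n)) : IsSquare (genericSkew n).det := by
  let K := FractionRing (MvPolynomial (n × n) ℤ)
  apply IsIntegrallyClosed.isSquare_of_isSquare_algebraMap (K := K)
  rw [RingHom.map_det]
  exact ((isAlternating_genericSkew n).map _).isSquare_det_of_field hn

theorem IsAlternating.exists_map_genericSkew_eq {n R : Type*} [LinearOrder n] [CommRing R]
    {A : Matrix n n R} (hA : A.IsAlternating) :
    ∃ φ : MvPolynomial (n × n) ℤ →+* R, (genericSkew n).map φ = A := by
  refine ⟨(aeval fun p => if p.1 < p.2 then A p.1 p.2 else 0).toRingHom, ?_⟩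
  ext i j
  rcases lt_trichotomy i j with h | rfl | h
  · simp [genericSkew, h, lt_asymm h]
  · simp [genericSkew, hA.apply_self]
  · simp [genericSkew, h, lt_asymm h, hA.apply_swap i j]

theorem IsAlternating.isSquare_det {n R : Type*} [Fintype n] [DecidableEq n] [CommRing R]
    {A : Matrix n n R} (hA : A.IsAlternating) (hn : Even (Fintype.card n)) : IsSquare A.det := by
  -- any orientation of the pairs `{i, j}` will do
  let : LinearOrder n := LinearOrder.lift' _ (Fintype.equivFin n).injective
  obtain ⟨φ, rfl⟩ := hA.exists_map_genericSkew_eq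
  rw [← RingHom.mapMatrix_apply, ← RingHom.map_det]
  exact (isSquare_det_genericSkew n hn).map φ

end Matrix

/-- If `n` is even, the determinant of an anti-symmetric `n × n` matrix
(`A i i = 0` and `A i j + A j i = 0`) over a commutative ring `R` is a square in `R`. -/
theorem det_antisymmetric_is_square {R : Type*} [CommRing R] {n : ℕ} (hn : Even n)
    (A : Matrix (Fin n) (Fin n) R)
    (hdiag : ∀ i, A i i = 0)
    (hskew : ∀ i j, A i j + A j i = 0) :
    ∃ f : R, A.det = f ^ 2 := by
  have hA : A.IsAlternating :=
    ⟨by ext i j; exact eq_neg_of_add_eq_zero_left (hskew j i), hdiag⟩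
  obtain ⟨f, hf⟩ := hA.isSquare_det (by simpa using hn)
  exact ⟨f, by rw [hf, sq]⟩
end

section
/- Let k be a field of characteristic 2, let m ≥ 2 and 0 ≤ 2r ≤ 2m−4 be integers, let S = k[x_{ij} : 1 ≤ i < j ≤ 2m] be the polynomial ring, and let A be the 2m×2m matrix over S whose (i,j) entry is x_{ij} if i < j, x_{ij} if i > j (signs are trivial in characteristic 2), and 0 if i = j. Then there is a unique polynomial g ∈ S with g² = det(J_{2r,2m} + A), and the homogeneous components of g of degree 0 and of degree 1 both vanish; equivalently, every monomial occurring in det(J_{2r,2m} + A) has degree at least 4. -/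
/-!
In characteristic 2 the matrix `M = J_{2r,2m} + A` is symmetric with zero diagonal. In the Leibniz
expansion of `det M` the terms of `σ` and `σ⁻¹` are equal and cancel, and involutions with a fixed
point contribute `0`, so only fixed-point-free involutions (perfect matchings) survive; each
contributes the square of the product of `M` over its `m` pairs. Hence `det M` is the square of the
hafnian of `M` (which in characteristic 2 is its Pfaffian), its unique square root. At most `r` of
the `m` pairs of a matching are blocks of `J_{2r,2m}`; as `r ≤ m - 2`, at least two pairs carry a
bare variable, so every monomial of the hafnian has degree at least 2.
-/

/-- The index type for the variables `x_{ij}`, `1 ≤ i < j ≤ 2m`. -/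
abbrev PairIdx (m : ℕ) := {p : Fin (2*m) × Fin (2*m) // p.1 < p.2}

/-- `Jmat K r n` is the `n × n` matrix `J_{2r,n}` having `r` copies of the
`2 × 2` block `J₂ = [[0,1],[-1,0]]` placed consecutively along the diagonal
starting from the top-left corner, and all other entries `0`. -/
def Jmat (K : Type*) [CommRing K] (r n : ℕ) : Matrix (Fin n) (Fin n) K :=
  Matrix.of fun i j =>
    if (j : ℕ) = (i : ℕ) + 1 ∧ (i : ℕ) % 2 = 0 ∧ (j : ℕ) < 2 * r then (1 : K)
    else if (i : ℕ) = (j : ℕ) + 1 ∧ (j : ℕ) % 2 = 0 ∧ (i : ℕ) < 2 * r then -1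
    else 0

/-- The generic `2m × 2m` anti-symmetric matrix in characteristic `2`: the `(i,j)`
entry is `x_{ij}` for `i < j`, `x_{ji}` for `i > j` (signs are trivial in
characteristic `2`), and `0` for `i = j`. -/
noncomputable def AmatSym (k : Type*) [Field k] (m : ℕ) :
    Matrix (Fin (2*m)) (Fin (2*m)) (MvPolynomial (PairIdx m) k) :=
  Matrix.of fun i j =>
    if h : i < j then MvPolynomial.X ⟨(i, j), h⟩
    else if h' : j < i then MvPolynomial.X ⟨(j, i), h'⟩
    else 0

open Finset MvPolynomial Equiv

section Involutions

variable {ι : Type*} [Fintype ι] [DecidableEq ι]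

def fixedPointFreeInvolutions (ι : Type*) [Fintype ι] [DecidableEq ι] : Finset (Perm ι) :=
  {σ | σ⁻¹ = σ ∧ ∀ i, σ i ≠ i}

lemma inv_mem_fixedPointFreeInvolutions_iff {σ : Perm ι} :
    σ⁻¹ ∈ fixedPointFreeInvolutions ι ↔ σ ∈ fixedPointFreeInvolutions ι := by
  have inv_mem (τ : Perm ι) (h : τ ∈ fixedPointFreeInvolutions ι) :
      τ⁻¹ ∈ fixedPointFreeInvolutions ι := by
    rwa [(mem_filter.mp h).2.1]
  exact ⟨fun h => inv_inv σ ▸ inv_mem _ h, inv_mem σ⟩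

lemma apply_apply_of_mem_fixedPointFreeInvolutions {σ : Perm ι}
    (hσ : σ ∈ fixedPointFreeInvolutions ι) (i : ι) : σ (σ i) = i := by
  conv_rhs => rw [← σ.symm_apply_apply i]
  rw [← Perm.coe_inv, (mem_filter.mp hσ).2.1]

lemma apply_ne_of_mem_fixedPointFreeInvolutions {σ : Perm ι}
    (hσ : σ ∈ fixedPointFreeInvolutions ι) (i : ι) : σ i ≠ i :=
  (mem_filter.mp hσ).2.2 i

end Involutions

section LinearOrder

variable {ι : Type*} [Fintype ι] [LinearOrder ι] {σ : Perm ι}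

@[to_additive]
lemma prod_filter_not_lt_apply {β : Type*} [CommMonoid β]
    (hinv : ∀ i, σ (σ i) = i) (hfix : ∀ i, σ i ≠ i) (f : ι → β) :
    ∏ i with ¬ i < σ i, f i = ∏ i with i < σ i, f (σ i) :=
  prod_nbij' σ σ (fun i hi => by simpa [hinv] using lt_of_le_of_ne (by simpa using hi) (hfix i))
    (fun i hi => by simpa [hinv] using (by simpa using hi : i < σ i).le)
    (fun i _ => hinv i) (fun i _ => hinv i) (fun i _ => by rw [hinv])

lemma two_mul_card_filter_lt (hinv : ∀ i, σ (σ i) = i) (hfix : ∀ i, σ i ≠ i) :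
    2 * #{i | i < σ i} = Fintype.card ι := by
  have h := card_filter_add_card_filter_not (s := univ) (fun i => i < σ i)
  rw [card_eq_sum_ones (filter (fun i => ¬ i < σ i) univ), sum_filter_not_lt_apply hinv hfix,
    ← card_eq_sum_ones, card_univ] at h
  omega

lemma prod_apply_eq_sq_prod_filter_lt {β : Type*} [CommMonoid β] (hinv : ∀ i, σ (σ i) = i)
    (hfix : ∀ i, σ i ≠ i) {f : ι → ι → β} (hf : ∀ i j, f i j = f j i) :
    ∏ i, f (σ i) i = (∏ i with i < σ i, f i (σ i)) ^ 2 := by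
  rw [← prod_filter_mul_prod_filter_not univ (fun i => i < σ i), prod_filter_not_lt_apply hinv hfix,
    sq]
  simp only [hinv, hf (σ _)]

end LinearOrder

lemma intUnit_smul_eq_self {R : Type*} [Ring R] [CharP R 2] (u : ℤˣ) (x : R) : u • x = x := by
  rcases Int.units_eq_one_or u with rfl | rfl <;> simp [Units.smul_def, CharTwo.neg_eq]

namespace Matrix

def hafnian {ι R : Type*} [Fintype ι] [LinearOrder ι] [CommSemiring R] (M : Matrix ι ι R) : R :=
  ∑ σ ∈ fixedPointFreeInvolutions ι, ∏ i with i < σ i, M i (σ i)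

variable {ι R : Type*} [Fintype ι] [CommRing R] [CharP R 2] {M : Matrix ι ι R}

theorem det_eq_sum_fixedPointFreeInvolutions [DecidableEq ι] (hM : M.IsSymm)
    (hdiag : ∀ i, M i i = 0) :
    M.det = ∑ σ ∈ fixedPointFreeInvolutions ι, ∏ i, M (σ i) i := by
  have prod_inv (σ : Perm ι) : ∏ i, M (σ⁻¹ i) i = ∏ i, M (σ i) i := by
    rw [← Equiv.prod_comp σ]
    simp only [Perm.coe_inv, symm_apply_apply]
    exact prod_congr rfl fun i _ => (hM.apply i (σ i)).symm
  have prod_eq_zero_of_fixed {σ : Perm ι} (h : ∃ i, σ i = i) : ∏ i, M (σ i) i = 0 := by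
    obtain ⟨i, hi⟩ := h
    exact prod_eq_zero (mem_univ i) (by rw [hi, hdiag])
  simp_rw [det_apply, intUnit_smul_eq_self]
  rw [← sum_add_sum_compl (fixedPointFreeInvolutions ι), add_eq_left]
  refine sum_involution (fun σ _ => σ⁻¹) (fun σ _ => by rw [prod_inv, CharTwo.add_self_eq_zero])
    (fun σ hσ hne hinv => hne (prod_eq_zero_of_fixed ?_)) (fun σ hσ => ?_) (fun σ _ => inv_inv σ)
  · by_contra! hfix
    exact mem_compl.mp hσ (mem_filter.mpr ⟨mem_univ σ, hinv, hfix⟩)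
  · rwa [mem_compl, inv_mem_fixedPointFreeInvolutions_iff, ← mem_compl]

theorem det_eq_hafnian_sq [LinearOrder ι] (hM : M.IsSymm) (hdiag : ∀ i, M i i = 0) :
    M.det = M.hafnian ^ 2 := by
  rw [det_eq_sum_fixedPointFreeInvolutions hM hdiag, hafnian, CharTwo.sum_sq]
  exact sum_congr rfl fun σ hσ => prod_apply_eq_sq_prod_filter_lt
    (apply_apply_of_mem_fixedPointFreeInvolutions hσ)
    (apply_ne_of_mem_fixedPointFreeInvolutions hσ) fun i j => (hM.apply i j).symm

end Matrix

namespace MvPolynomial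

variable {σ R : Type*} [CommSemiring R]

lemma coeff_X_mul_X_mul_eq_zero (u v : σ) (p : MvPolynomial σ R) {d : σ →₀ ℕ}
    (hd : d.degree ≤ 1) : coeff d (X u * X v * p) = 0 := by
  rw [X, X, monomial_mul, coeff_monomial_mul', if_neg]
  intro hle
  have := Finsupp.degree_mono hle
  simp only [map_add, Finsupp.degree_single] at this
  omega

lemma coeff_prod_eq_zero_of_eq_X {ι : Type*} [DecidableEq ι] {s : Finset ι}
    {f : ι → MvPolynomial σ R} {a b : ι} (ha : a ∈ s) (hb : b ∈ s) (hab : a ≠ b) {u v : σ}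
    (hfa : f a = X u) (hfb : f b = X v) {d : σ →₀ ℕ} (hd : d.degree ≤ 1) :
    coeff d (∏ i ∈ s, f i) = 0 := by
  rw [← mul_prod_erase s f ha, ← mul_prod_erase (s.erase a) f (mem_erase.mpr ⟨hab.symm, hb⟩),
    hfa, hfb, ← mul_assoc]
  exact coeff_X_mul_X_mul_eq_zero u v _ hd

end MvPolynomial

section JBlocks

variable {K : Type*} [CommRing K] {k : Type*} [Field k] {m r n : ℕ}

lemma Jmat_isSymm [CharP K 2] : (Jmat K r n).IsSymm := by
  refine Matrix.IsSymm.ext fun i j => ?_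
  simp only [Jmat, Matrix.of_apply]
  split_ifs <;> first | rfl | simp [CharTwo.neg_eq]

lemma Jmat_apply_self (i : Fin n) : Jmat K r n i i = 0 := by
  simp [Jmat]

lemma AmatSym_isSymm : (AmatSym k m).IsSymm := by
  refine Matrix.IsSymm.ext fun i j => ?_
  simp only [AmatSym, Matrix.of_apply]
  rcases lt_trichotomy i j with h | rfl | h
  · rw [dif_neg (asymm h), dif_pos h, dif_pos h]
  · rfl
  · rw [dif_pos h, dif_neg (asymm h), dif_pos h]

lemma AmatSym_apply_self (i : Fin (2 * m)) : AmatSym k m i i = 0 := by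
  simp [AmatSym]

lemma Jmat_add_AmatSym_apply_of_lt {i j : Fin (2 * m)} (hij : i < j)
    (hblock : ¬((j : ℕ) = i + 1 ∧ (i : ℕ) % 2 = 0 ∧ (j : ℕ) < 2 * r)) :
    (Jmat (MvPolynomial (PairIdx m) k) r (2 * m) + AmatSym k m) i j = X ⟨(i, j), hij⟩ := by
  rw [Matrix.add_apply, Jmat, AmatSym, Matrix.of_apply, Matrix.of_apply, if_neg hblock,
    if_neg (by omega), dif_pos hij, zero_add]

lemma card_filter_block_le (σ : Fin n → Fin n) :
    #{i | (σ i : ℕ) = i + 1 ∧ (i : ℕ) % 2 = 0 ∧ (σ i : ℕ) < 2 * r} ≤ r := by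
  refine (card_le_card_of_injOn (t := range r) (fun i : Fin n => (i : ℕ) / 2) ?_ ?_).trans_eq
    (card_range r)
  · intro i hi
    simp only [coe_filter, Set.mem_ofPred_eq, mem_coe, mem_range] at hi ⊢
    omega
  · intro i hi j hj hij
    simp only [coe_filter, Set.mem_ofPred_eq] at hi hj hij
    exact Fin.ext (by omega)

lemma exists_pairs_off_blocks {σ : Perm (Fin (2 * m))} (hσ : σ ∈ fixedPointFreeInvolutions _)
    (hrm : r + 2 ≤ m) :
    ∃ a b, a ≠ b ∧ a < σ a ∧ b < σ b ∧
      ¬((σ a : ℕ) = a + 1 ∧ (a : ℕ) % 2 = 0 ∧ (σ a : ℕ) < 2 * r) ∧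
      ¬((σ b : ℕ) = b + 1 ∧ (b : ℕ) % 2 = 0 ∧ (σ b : ℕ) < 2 * r) := by
  set pairs : Finset (Fin (2 * m)) := {i | i < σ i}
  set blocks : Finset (Fin (2 * m)) := {i | (σ i : ℕ) = i + 1 ∧ (i : ℕ) % 2 = 0 ∧ (σ i : ℕ) < 2 * r}
  have hpairs : 2 * #pairs = 2 * m := by
    rw [two_mul_card_filter_lt (apply_apply_of_mem_fixedPointFreeInvolutions hσ)
      (apply_ne_of_mem_fixedPointFreeInvolutions hσ), Fintype.card_fin]
  have hblocks : #blocks ≤ r := card_filter_block_le σ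
  have : 1 < #(pairs \ blocks) := by
    have := le_card_sdiff blocks pairs
    omega
  obtain ⟨a, ha, b, hb, hab⟩ := one_lt_card.mp this
  simp only [pairs, blocks, mem_sdiff, mem_filter, mem_univ, true_and] at ha hb
  exact ⟨a, b, hab, ha.1, hb.1, ha.2, hb.2⟩

lemma coeff_hafnian_Jmat_add_AmatSym_eq_zero (hrm : r + 2 ≤ m)
    {d : PairIdx m →₀ ℕ} (hd : d.degree ≤ 1) :
    coeff d (Jmat (MvPolynomial (PairIdx m) k) r (2 * m) + AmatSym k m).hafnian = 0 := by
  rw [Matrix.hafnian, coeff_sum]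
  refine sum_eq_zero fun σ hσ => ?_
  obtain ⟨a, b, hab, ha, hb, hJa, hJb⟩ := exists_pairs_off_blocks hσ hrm
  exact coeff_prod_eq_zero_of_eq_X (by simpa using ha) (by simpa using hb) hab
    (Jmat_add_AmatSym_apply_of_lt ha hJa) (Jmat_add_AmatSym_apply_of_lt hb hJb) hd

end JBlocks

/-- Over a field `k` of characteristic `2`, for `m ≥ 2` and `2r ≤ 2m - 4`,
there is a unique polynomial `g` with `g² = det(J_{2r,2m} + A)` (where `A` is
the generic anti-symmetric matrix), and the homogeneous components of `g`
of degrees `0` and `1` both vanish. -/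
theorem sqrt_det_no_low_terms {k : Type*} [Field k] [CharP k 2] {m r : ℕ}
    (hm : 2 ≤ m) (hr : 2 * r ≤ 2 * m - 4) :
    (∃! g : MvPolynomial (PairIdx m) k,
        g ^ 2 = (Jmat (MvPolynomial (PairIdx m) k) r (2*m) + AmatSym k m).det) ∧
    ∀ g : MvPolynomial (PairIdx m) k,
      g ^ 2 = (Jmat (MvPolynomial (PairIdx m) k) r (2*m) + AmatSym k m).det →
        MvPolynomial.homogeneousComponent 0 g = 0 ∧
        MvPolynomial.homogeneousComponent 1 g = 0 := by
  set M := Jmat (MvPolynomial (PairIdx m) k) r (2 * m) + AmatSym k m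
  have hdet : M.det = M.hafnian ^ 2 := Matrix.det_eq_hafnian_sq (Jmat_isSymm.add AmatSym_isSymm)
    fun i => by simp [M, Jmat_apply_self, AmatSym_apply_self]
  have huniq (g : MvPolynomial (PairIdx m) k) (hg : g ^ 2 = M.det) : g = M.hafnian :=
    frobenius_inj _ 2 (by rw [frobenius_def, frobenius_def, hg, hdet])
  refine ⟨⟨M.hafnian, hdet.symm, huniq⟩, fun g hg => ?_⟩
  have hlow (n : ℕ) (hn : n ≤ 1) : homogeneousComponent n M.hafnian = 0 :=
    homogeneousComponent_eq_zero' _ _ fun d hd hdeg =>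
      mem_support_iff.mp hd (coeff_hafnian_Jmat_add_AmatSym_eq_zero (d := d) (by omega) (by omega))
  rw [huniq g hg]
  exact ⟨hlow 0 zero_le_one, hlow 1 le_rfl⟩
end

section
/- Let K be a field, let n ≥ 2 be an even integer, and let T ∈ GL(n, K). Then Tᵀ J_{n−2,n} T = J_{n−2,n} holds if and only if, writing T in block form with respect to the decomposition n = (n−2) + 2 as T = [[A, A'],[C, B]] where A is (n−2)×(n−2) and B is 2×2, one has A' = 0, Aᵀ J_{n−2,n−2} A = J_{n−2,n−2}, and B ∈ GL(2, K) (with C an arbitrary 2×(n−2) block). -/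
/-!
Split `Fin (2r+2)` as `Fin (2r) ⊕ Fin 2`, so that `J_{2r,2r+2} = [[J, 0], [0, 0]]` with
`J = J_{2r,2r}` invertible (`J² = -1`). For `T = [[A, A'], [C, B]]` the product `Tᵀ J_{2r,2r+2} T`
is `[[AᵀJA, AᵀJA'], [A'ᵀJA, A'ᵀJA']]`. If `AᵀJA = J` then `A` is invertible, so `AᵀJ` is
invertible and `AᵀJA' = 0` forces `A' = 0`. Then `det T = det A · det B`, so `B` is invertible
together with `T`.
-/

open Matrix

section Blocks

variable {R : Type*} [CommRing R] {m n : Type*} [Fintype m] [Fintype n]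

theorem transpose_mul_fromBlocks_mul_fromBlocks (J A : Matrix m m R) (A' : Matrix m n R)
    (C : Matrix n m R) (B : Matrix n n R) :
    (fromBlocks A A' C B)ᵀ * fromBlocks J 0 0 0 * fromBlocks A A' C B =
      fromBlocks (Aᵀ * J * A) (Aᵀ * J * A') (A'ᵀ * J * A) (A'ᵀ * J * A') := by
  simp only [fromBlocks_transpose, fromBlocks_multiply, Matrix.mul_zero, Matrix.zero_mul,
    add_zero]

theorem isUnit_det_of_transpose_mul_mul_eq [DecidableEq m] {J A : Matrix m m R}
    (hJ : IsUnit J.det) (h : Aᵀ * J * A = J) : IsUnit A.det := by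
  have hdet : A.det * A.det * J.det = 1 * J.det :=
    calc A.det * A.det * J.det = (Aᵀ * J * A).det := by
          rw [det_mul, det_mul, det_transpose]; ring
      _ = 1 * J.det := by rw [h, one_mul]
  exact IsUnit.of_mul_eq_one _ (hJ.mul_left_injective hdet)

theorem transpose_mul_fromBlocks_mul_eq_iff [DecidableEq m] {J : Matrix m m R}
    (hJ : IsUnit J.det) (A : Matrix m m R) (A' : Matrix m n R) (C : Matrix n m R)
    (B : Matrix n n R) :
    (fromBlocks A A' C B)ᵀ * fromBlocks J 0 0 0 * fromBlocks A A' C B = fromBlocks J 0 0 0 ↔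
      A' = 0 ∧ Aᵀ * J * A = J := by
  rw [transpose_mul_fromBlocks_mul_fromBlocks, fromBlocks_inj]
  constructor
  · rintro ⟨hA, hA', -, -⟩
    have hAJ : IsUnit (Aᵀ * J).det := by
      rw [det_mul, det_transpose]
      exact (isUnit_det_of_transpose_mul_mul_eq hJ hA).mul hJ
    refine ⟨?_, hA⟩
    calc A' = (Aᵀ * J)⁻¹ * (Aᵀ * J * A') := by
          rw [← Matrix.mul_assoc, nonsing_inv_mul _ hAJ, Matrix.one_mul]
      _ = 0 := by rw [hA', Matrix.mul_zero]
  · rintro ⟨rfl, hA⟩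
    simp [hA]

theorem reindex_transpose_mul_mul {l : Type*} [Fintype l] (e : m ≃ l) (X Y : Matrix m m R) :
    (reindex e e X)ᵀ * reindex e e Y * reindex e e X = reindex e e (Xᵀ * Y * X) := by
  simp only [reindex_apply, transpose_submatrix, submatrix_mul_equiv]

end Blocks

theorem Jmat_mul_self (K : Type*) [CommRing K] (r : ℕ) :
    Jmat K r (2 * r) * Jmat K r (2 * r) = -1 := by
  ext i j
  have hi := i.isLt
  -- the only nonzero entry in row `i` of `J_{2r,2r}` sits in the partner column of `i`
  set p : Fin (2 * r) := ⟨if (i : ℕ) % 2 = 0 then i + 1 else i - 1, by split_ifs <;> omega⟩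
  rw [mul_apply, Finset.sum_eq_single p]
  · rw [neg_apply, one_apply]
    simp only [Jmat, of_apply, p, Fin.ext_iff]
    split_ifs <;> first | omega | simp
  · intro k _ hk
    rw [Ne, Fin.ext_iff] at hk
    simp only [Jmat, of_apply, p] at hk ⊢
    split_ifs at hk ⊢ <;> first | omega | simp
  · simp

theorem isUnit_det_Jmat (K : Type*) [CommRing K] (r : ℕ) : IsUnit (Jmat K r (2 * r)).det :=
  isUnit_det_of_right_inverse (B := -Jmat K r (2 * r)) (by rw [mul_neg, Jmat_mul_self, neg_neg])

theorem Jmat_eq_reindex_fromBlocks (K : Type*) [CommRing K] (r : ℕ) :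
    Jmat K r (2 * r + 2) =
      reindex finSumFinEquiv finSumFinEquiv (fromBlocks (Jmat K r (2 * r)) 0 0 0) := by
  ext i j
  induction i using Fin.addCases <;> induction j using Fin.addCases <;>
    simp only [Jmat, reindex_apply, submatrix_apply, of_apply, finSumFinEquiv_symm_apply_castAdd,
      finSumFinEquiv_symm_apply_natAdd, fromBlocks_apply₁₁, fromBlocks_apply₁₂, fromBlocks_apply₂₁,
      fromBlocks_apply₂₂, Matrix.zero_apply, Fin.val_castAdd, Fin.val_natAdd] <;>
    split_ifs <;> first | rfl | omega

/-- Let `K` be a field and `n = 2r + 2` an even integer `≥ 2`, and let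
`T ∈ GL(n, K)`. Then `Tᵀ J_{n-2,n} T = J_{n-2,n}` holds if and only if, writing
`T` in block form with respect to `n = (n-2) + 2` as `[[A, A'],[C, B]]`, one has
`A' = 0`, `Aᵀ J_{n-2,n-2} A = J_{n-2,n-2}`, and `B ∈ GL(2, K)` (with `C`
arbitrary). -/
theorem preserve_Jmat_iff_block_form {K : Type*} [Field K] {r : ℕ}
    (T : Matrix (Fin (2*r+2)) (Fin (2*r+2)) K) (hT : IsUnit T.det) :
    Tᵀ * Jmat K r (2*r+2) * T = Jmat K r (2*r+2) ↔
      ∃ (A : Matrix (Fin (2*r)) (Fin (2*r)) K)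
        (C : Matrix (Fin 2) (Fin (2*r)) K)
        (B : Matrix (Fin 2) (Fin 2) K),
        T = Matrix.reindex finSumFinEquiv finSumFinEquiv (Matrix.fromBlocks A 0 C B) ∧
        Aᵀ * Jmat K r (2*r) * A = Jmat K r (2*r) ∧
        IsUnit B.det := by
  obtain ⟨M, rfl⟩ := (reindex finSumFinEquiv finSumFinEquiv).surjective T
  have hJ := isUnit_det_Jmat K r
  rw [Jmat_eq_reindex_fromBlocks, reindex_transpose_mul_mul]
  simp only [(reindex _ _).injective.eq_iff]
  constructor
  · intro h
    rw [← fromBlocks_toBlocks M, transpose_mul_fromBlocks_mul_eq_iff hJ] at h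
    obtain ⟨hA', hA⟩ := h
    rw [det_reindex_self, ← fromBlocks_toBlocks M, hA', det_fromBlocks_zero₁₂] at hT
    exact ⟨M.toBlocks₁₁, M.toBlocks₂₁, M.toBlocks₂₂, by rw [← hA', fromBlocks_toBlocks], hA,
      (IsUnit.mul_iff.mp hT).2⟩
  · rintro ⟨A, C, B, rfl, hA, -⟩
    exact (transpose_mul_fromBlocks_mul_eq_iff hJ A 0 C B).2 ⟨rfl, hA⟩
end

section
/- Let k be an algebraically closed field of characteristic 2, and let g₁, …, g_l be formal power series in k[[s,t]] each of which is degenerate, i.e., for each i the coefficients of 1, s, t, and st in g_i all vanish. Let a_i and b_i denote the coefficients of s² and t² in g_i, respectively, and let J be the ideal of k[[s,t]] generated by g₁, …, g_l. Then the following are equivalent: (1) dim_k k[[s,t]]/J ≤ 4; (2) J = (s², t²); (3) the 2×l matrix whose first row is (a₁, …, a_l) and second row is (b₁, …, b_l) has rank 2. -/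
/-!
Write `N = (s², t²)`. A series lies in `N` exactly when its coefficients of `sⁱtʲ` with
`i, j < 2` vanish, so `J ⊆ N`, and these four coefficients identify `k[[s,t]]/N` with `k⁴`;
hence `dim k[[s,t]]/J ≤ 4` forces `J = N`.

For `φ ∈ N` the pair (coefficient of `s²`, coefficient of `t²`) of `r * φ` is `r(0)` times
that of `φ`, so the pairs attached to elements of `J` form exactly the column space of the
matrix `(aᵢ; bᵢ)`. If this is all of `k²`, then `J` contains `A s² + B t²` and `C s² + D t²`
with `A(0) = D(0) = 1` and `B(0) = C(0) = 0`; since `AD - BC` is then a unit, Cramer's rule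
puts `s²` and `t²` in `J`. Conversely, if `J = N` then `s², t² ∈ J` realise both unit vectors.
-/

open Cardinal

theorem Ideal.eq_of_le_of_rank_quotient_le {K A : Type*} [Field K] [CommRing A] [Algebra K A]
    {I J : Ideal A} (hle : I ≤ J) (hrank : Module.rank K (A ⧸ I) ≤ Module.rank K (A ⧸ J))
    (hfin : Module.rank K (A ⧸ J) < ℵ₀) : I = J := by
  let π := (Ideal.Quotient.factorₐ K hle).toLinearMap
  have hsum := π.rank_range_add_rank_ker
  rw [LinearMap.range_eq_top.mpr (Ideal.Quotient.factor_surjective hle), rank_top] at hsum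
  have hker : LinearMap.ker π = ⊥ := by
    rw [← Submodule.rank_eq_zero, ← nonpos_iff_eq_zero, ← add_le_add_iff_of_lt_aleph0 hfin,
      zero_add, add_comm, hsum]
    exact hrank
  refine le_antisymm hle fun x hx => ?_
  rw [← Ideal.Quotient.eq_zero_iff_mem]
  exact LinearMap.ker_eq_bot'.mp hker _ (Ideal.Quotient.eq_zero_iff_mem.mpr hx)

theorem Matrix.rank_eq_card_iff_range_eq_top {K m n : Type*} [Field K] [Fintype m]
    [Fintype n] (A : Matrix m n K) :
    A.rank = Fintype.card m ↔ LinearMap.range A.mulVecLin = ⊤ := by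
  refine ⟨fun h => Submodule.eq_top_of_finrank_eq ?_, fun h => ?_⟩
  · rw [← Matrix.rank, h, Module.finrank_fintype_fun_eq_card]
  · rw [Matrix.rank, h, finrank_top, Module.finrank_fintype_fun_eq_card]

theorem Ideal.mem_of_isUnit_det {R : Type*} [CommRing R] {I : Ideal R} {x y a b c d : R}
    (hu : a * x + b * y ∈ I) (hv : c * x + d * y ∈ I) (hdet : IsUnit (a * d - b * c)) :
    x ∈ I ∧ y ∈ I := by
  rw [← I.unit_mul_mem_iff_mem hdet, ← I.unit_mul_mem_iff_mem hdet (x := y)]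
  constructor
  · convert I.sub_mem (I.mul_mem_left d hu) (I.mul_mem_left b hv) using 1; ring
  · convert I.sub_mem (I.mul_mem_left a hv) (I.mul_mem_left c hu) using 1; ring

theorem Finsupp.eq_single_zero_add_single_one (n : Fin 2 →₀ ℕ) :
    n = single 0 (n 0) + single 1 (n 1) := by
  ext x; fin_cases x <;> simp

namespace MvPowerSeries

open Finsupp

section CommSemiring

variable {R : Type*} [CommSemiring R]

theorem mem_span_X_pow_pair_iff {a b : ℕ} {φ : MvPowerSeries (Fin 2) R} :
    φ ∈ Ideal.span {X 0 ^ a, X 1 ^ b} ↔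
      ∀ n : Fin 2 →₀ ℕ, n 0 < a → n 1 < b → coeff n φ = 0 := by
  constructor
  · rintro hφ n ha hb
    obtain ⟨p, q, rfl⟩ := Ideal.mem_span_pair.mp hφ
    rw [map_add, X_pow_dvd_iff.mp (dvd_mul_left _ p) n ha,
      X_pow_dvd_iff.mp (dvd_mul_left _ q) n hb, add_zero]
  · intro h
    -- `φ = ψ + χ`, where `ψ` collects the terms divisible by `X 0 ^ a`;
    -- the hypothesis says exactly that `X 1 ^ b` divides the rest `χ`.
    let ψ : MvPowerSeries (Fin 2) R := fun n => if n 0 < a then 0 else coeff n φ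
    let χ : MvPowerSeries (Fin 2) R := fun n => if n 0 < a then coeff n φ else 0
    obtain ⟨p, hp⟩ : X 0 ^ a ∣ ψ := X_pow_dvd_iff.mpr fun n hn => if_pos hn
    obtain ⟨q, hq⟩ : X 1 ^ b ∣ χ := X_pow_dvd_iff.mpr fun n hn => by
      change ite _ _ _ = 0
      split_ifs with ha
      exacts [h n ha hn, rfl]
    refine Ideal.mem_span_pair.mpr ⟨p, q, ?_⟩
    rw [mul_comm p, mul_comm q, ← hp, ← hq]
    ext n
    change (if n 0 < a then 0 else coeff n φ) + (if n 0 < a then coeff n φ else 0) = _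
    split_ifs <;> simp

theorem mem_span_X_sq_pair_of_coeff {φ : MvPowerSeries (Fin 2) R}
    (h : coeff 0 φ = 0 ∧ coeff (single 0 1) φ = 0 ∧ coeff (single 1 1) φ = 0 ∧
      coeff (single 0 1 + single 1 1) φ = 0) :
    φ ∈ Ideal.span {X 0 ^ 2, X 1 ^ 2} := by
  obtain ⟨h00, h10, h01, h11⟩ := h
  refine mem_span_X_pow_pair_iff.mpr fun n h0 h1 => ?_
  rw [eq_single_zero_add_single_one n]
  interval_cases n 0 <;> interval_cases n 1 <;> simpa

variable (R) in
noncomputable def lowCoeffs (a b : ℕ) : MvPowerSeries (Fin 2) R →ₗ[R] (Fin a × Fin b → R) :=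
  LinearMap.pi fun ij => coeff (single 0 (ij.1 : ℕ) + single 1 (ij.2 : ℕ))

theorem ker_lowCoeffs (a b : ℕ) :
    LinearMap.ker (lowCoeffs R a b) = (Ideal.span {X 0 ^ a, X 1 ^ b}).restrictScalars R := by
  ext φ
  rw [Submodule.restrictScalars_mem, mem_span_X_pow_pair_iff, LinearMap.mem_ker, funext_iff]
  refine ⟨fun h n ha hb => ?_, fun h ij => h _ (by simp) (by simp)⟩
  rw [eq_single_zero_add_single_one n]
  exact h (⟨n 0, ha⟩, ⟨n 1, hb⟩)

theorem lowCoeffs_surjective (a b : ℕ) : Function.Surjective (lowCoeffs R a b) := by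
  intro f
  refine ⟨fun n => if h : n 0 < a ∧ n 1 < b then f (⟨n 0, h.1⟩, ⟨n 1, h.2⟩) else 0, ?_⟩
  ext ⟨i, j⟩
  change dite _ _ _ = _
  simp

noncomputable def quadCoeffs : MvPowerSeries (Fin 2) R →ₗ[R] (Fin 2 → R) :=
  LinearMap.pi fun x => coeff (single x 2)

theorem quadCoeffs_mul_X_sq_add (A B : MvPowerSeries (Fin 2) R) :
    quadCoeffs (A * X 0 ^ 2 + B * X 1 ^ 2) = ![constantCoeff A, constantCoeff B] := by
  ext x
  fin_cases x <;> simp [quadCoeffs, X_pow_eq, coeff_mul_monomial, single_le_iff]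

theorem quadCoeffs_mul_of_mem {φ : MvPowerSeries (Fin 2) R}
    (hφ : φ ∈ Ideal.span {X 0 ^ 2, X 1 ^ 2}) (r : MvPowerSeries (Fin 2) R) :
    quadCoeffs (r * φ) = constantCoeff r • quadCoeffs φ := by
  obtain ⟨A, B, rfl⟩ := Ideal.mem_span_pair.mp hφ
  rw [mul_add, ← mul_assoc, ← mul_assoc, quadCoeffs_mul_X_sq_add, quadCoeffs_mul_X_sq_add]
  simp

theorem map_quadCoeffs_span_range {l : ℕ} {g : Fin l → MvPowerSeries (Fin 2) R}
    (hg : ∀ i, g i ∈ Ideal.span {X 0 ^ 2, X 1 ^ 2}) :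
    ((Ideal.span (Set.range g)).restrictScalars R).map quadCoeffs =
      LinearMap.range (Matrix.of fun x i => coeff (single x 2) (g i)).mulVecLin := by
  have hsum (r : Fin l → MvPowerSeries (Fin 2) R) : quadCoeffs (∑ i, r i * g i) =
      (Matrix.of fun x i => coeff (single x 2) (g i)).mulVec fun i => constantCoeff (r i) := by
    ext x
    simp only [map_sum, quadCoeffs_mul_of_mem (hg _), Finset.sum_apply, Pi.smul_apply,
      smul_eq_mul]
    simp [Matrix.mulVec, dotProduct, quadCoeffs, mul_comm]
  ext w
  simp only [Submodule.mem_map, Submodule.restrictScalars_mem,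
    Ideal.mem_span_range_iff_exists_fun, LinearMap.mem_range, Matrix.mulVecLin_apply]
  constructor
  · rintro ⟨_, ⟨r, rfl⟩, rfl⟩
    exact ⟨_, (hsum r).symm⟩
  · rintro ⟨c, rfl⟩
    exact ⟨_, ⟨fun i => C (c i), rfl⟩, by simp [hsum]⟩

end CommSemiring

theorem eq_span_X_sq_pair_iff {R : Type*} [CommRing R] {J : Ideal (MvPowerSeries (Fin 2) R)}
    (hJ : J ≤ Ideal.span {X 0 ^ 2, X 1 ^ 2}) :
    J = Ideal.span {X 0 ^ 2, X 1 ^ 2} ↔ (J.restrictScalars R).map quadCoeffs = ⊤ := by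
  constructor
  · rintro rfl
    refine Submodule.eq_top_iff'.mpr fun w => ⟨C (w 0) * X 0 ^ 2 + C (w 1) * X 1 ^ 2,
      Ideal.mem_span_pair.mpr ⟨_, _, rfl⟩, ?_⟩
    rw [quadCoeffs_mul_X_sq_add]
    ext x; fin_cases x <;> simp
  · intro h
    have hsurj (w : Fin 2 → R) : ∃ φ ∈ J, quadCoeffs φ = w := by
      simpa using Submodule.eq_top_iff'.mp h w
    obtain ⟨u, huJ, hu⟩ := hsurj ![1, 0]
    obtain ⟨v, hvJ, hv⟩ := hsurj ![0, 1]
    obtain ⟨A, B, rfl⟩ := Ideal.mem_span_pair.mp (hJ huJ)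
    obtain ⟨C', D, rfl⟩ := Ideal.mem_span_pair.mp (hJ hvJ)
    rw [quadCoeffs_mul_X_sq_add] at hu hv
    have hdet : IsUnit (A * D - B * C') := by
      rw [isUnit_iff_constantCoeff]
      simp_all [funext_iff, Fin.forall_fin_two]
    obtain ⟨hX0, hX1⟩ := Ideal.mem_of_isUnit_det huJ hvJ hdet
    exact le_antisymm hJ (Ideal.span_le.mpr (Set.pair_subset hX0 hX1))

theorem rank_quotient_span_X_pow_pair {k : Type*} [Field k] (a b : ℕ) :
    Module.rank k (MvPowerSeries (Fin 2) k ⧸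
      Ideal.span {(X 0 : MvPowerSeries (Fin 2) k) ^ a, X 1 ^ b}) = a * b := by
  let I := Ideal.span {(X 0 : MvPowerSeries (Fin 2) k) ^ a, X 1 ^ b}
  have e : (MvPowerSeries (Fin 2) k ⧸ I.restrictScalars k) ≃ₗ[k] (Fin a × Fin b → k) :=
    (Submodule.quotEquivOfEq _ _ (ker_lowCoeffs a b).symm).trans
      ((lowCoeffs k a b).quotKerEquivOfSurjective (lowCoeffs_surjective a b))
  rw [← (Submodule.Quotient.restrictScalarsEquiv k I).rank_eq, e.rank_eq, rank_fun']
  simp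

end MvPowerSeries

open MvPowerSeries

theorem degenerate_series_ideal_tfae_general {k : Type*} [Field k]
    {l : ℕ} (g : Fin l → MvPowerSeries (Fin 2) k)
    (hdeg : ∀ i,
      MvPowerSeries.coeff (0 : Fin 2 →₀ ℕ) (g i) = 0 ∧
      MvPowerSeries.coeff (Finsupp.single (0 : Fin 2) 1) (g i) = 0 ∧
      MvPowerSeries.coeff (Finsupp.single (1 : Fin 2) 1) (g i) = 0 ∧
      MvPowerSeries.coeff
        (Finsupp.single (0 : Fin 2) 1 + Finsupp.single (1 : Fin 2) 1) (g i) = 0) :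
    (Module.rank k (MvPowerSeries (Fin 2) k ⧸ Ideal.span (Set.range g)) ≤ 4 ↔
      Ideal.span (Set.range g) =
        Ideal.span ({(MvPowerSeries.X 0) ^ 2, (MvPowerSeries.X 1) ^ 2} :
          Set (MvPowerSeries (Fin 2) k))) ∧
    (Ideal.span (Set.range g) =
        Ideal.span ({(MvPowerSeries.X 0) ^ 2, (MvPowerSeries.X 1) ^ 2} :
          Set (MvPowerSeries (Fin 2) k)) ↔
      (Matrix.of fun (x : Fin 2) (i : Fin l) =>
        MvPowerSeries.coeff (Finsupp.single x 2) (g i)).rank = 2) := by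
  set N : Ideal (MvPowerSeries (Fin 2) k) := Ideal.span {X 0 ^ 2, X 1 ^ 2}
  have hg i : g i ∈ N := mem_span_X_sq_pair_of_coeff (hdeg i)
  have hJN : Ideal.span (Set.range g) ≤ N := Ideal.span_le.mpr (Set.range_subset_iff.mpr hg)
  have hN : Module.rank k (MvPowerSeries (Fin 2) k ⧸ N) = 4 := by
    rw [rank_quotient_span_X_pow_pair]; norm_num
  refine ⟨⟨fun h => Ideal.eq_of_le_of_rank_quotient_le hJN (hN ▸ h)
    (hN ▸ natCast_lt_aleph0), fun h => h ▸ hN.le⟩, ?_⟩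
  rw [eq_span_X_sq_pair_iff hJN, map_quadCoeffs_span_range hg,
    ← Matrix.rank_eq_card_iff_range_eq_top, Fintype.card_fin]

/-- Lemma on degenerate power series in `k[[s,t]]` in characteristic `2`:
let `g₁, …, g_l ∈ k[[s,t]]` be degenerate, i.e. the coefficients of `1`, `s`, `t`
and `st` of each `g_i` vanish, and let `a_i`, `b_i` be the coefficients of `s²`
and `t²` in `g_i`. Let `J = (g₁, …, g_l)`. Then the following are equivalent:
(1) `dim_k k[[s,t]]/J ≤ 4`; (2) `J = (s², t²)`; (3) the `2 × l` matrix with rows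
`(a₁, …, a_l)` and `(b₁, …, b_l)` has rank `2`. -/
theorem degenerate_series_ideal_tfae {k : Type*} [Field k] [IsAlgClosed k]
    [CharP k 2] {l : ℕ} (g : Fin l → MvPowerSeries (Fin 2) k)
    (hdeg : ∀ i,
      MvPowerSeries.coeff (0 : Fin 2 →₀ ℕ) (g i) = 0 ∧
      MvPowerSeries.coeff (Finsupp.single (0 : Fin 2) 1) (g i) = 0 ∧
      MvPowerSeries.coeff (Finsupp.single (1 : Fin 2) 1) (g i) = 0 ∧
      MvPowerSeries.coeff
        (Finsupp.single (0 : Fin 2) 1 + Finsupp.single (1 : Fin 2) 1) (g i) = 0) :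
    (Module.rank k (MvPowerSeries (Fin 2) k ⧸ Ideal.span (Set.range g)) ≤ 4 ↔
      Ideal.span (Set.range g) =
        Ideal.span ({(MvPowerSeries.X 0) ^ 2, (MvPowerSeries.X 1) ^ 2} :
          Set (MvPowerSeries (Fin 2) k))) ∧
    (Ideal.span (Set.range g) =
        Ideal.span ({(MvPowerSeries.X 0) ^ 2, (MvPowerSeries.X 1) ^ 2} :
          Set (MvPowerSeries (Fin 2) k)) ↔
      (Matrix.of fun (x : Fin 2) (i : Fin l) =>
        MvPowerSeries.coeff (Finsupp.single x 2) (g i)).rank = 2) :=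
  degenerate_series_ideal_tfae_general g hdeg
end

section
/- Let k be a field of characteristic 2, and let γ* : k[u₁, v₁, u₂, v₂, w, y] → k[x₁, x₂, z] be the k-algebra homomorphism determined by γ*(u₁) = x₁², γ*(v₁) = x₁z, γ*(u₂) = x₂², γ*(v₂) = x₂z, γ*(w) = x₁x₂z, γ*(y) = z. Then the kernel of γ* is the ideal of k[u₁, v₁, u₂, v₂, w, y] generated by the six polynomials u₁y² + v₁², u₂y² + v₂², w v₁ + u₁ v₂ y, w v₂ + u₂ v₁ y, v₁ v₂ + w y, and w² + u₁ u₂ y². -/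
/-!
`γ*` is a monomial map: it sends the monomial with exponent `n` to the monomial with exponent
`E n` for an additive map `E`. Hence `f ∈ ker γ*` lies in an ideal `I` as soon as every exponent
`n` is related, by the congruence `x^a - x^b ∈ I`, to a normal form `D (E n)` depending only on
`E n`: then `f ≡ ∑ cₙ x^(D (E n)) mod I`, and the right-hand side is obtained from `γ* f = 0` by
relabelling exponents along `D`.

Each of the six generators trades a product of two of `v₁, v₂, w` for a monomial of degree at most
one in these letters, so rewriting along them brings every exponent down to degree at most one in
`v₁, v₂, w`. Such a monomial is determined by its image, since the parities of the exponents of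
`x₁` and `x₂` tell which of `v₁, v₂, w` occurs. In characteristic `2` the binomials `x^a - x^b`
are exactly the given sums.
-/

open MvPolynomial

/-- The `k`-algebra homomorphism
`γ* : k[u₁, v₁, u₂, v₂, w, y] → k[x₁, x₂, z]` given by
`u₁ ↦ x₁²`, `v₁ ↦ x₁z`, `u₂ ↦ x₂²`, `v₂ ↦ x₂z`, `w ↦ x₁x₂z`, `y ↦ z`.
The six source variables `u₁, v₁, u₂, v₂, w, y` are encoded as
`X 0, X 1, X 2, X 3, X 4, X 5 : MvPolynomial (Fin 6) k`, and the target
variables `x₁, x₂, z` as `X 0, X 1, X 2 : MvPolynomial (Fin 3) k`. -/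
noncomputable def gammaStar (k : Type*) [Field k] :
    MvPolynomial (Fin 6) k →ₐ[k] MvPolynomial (Fin 3) k :=
  MvPolynomial.aeval
    ![(X 0) ^ 2, X 0 * X 2, (X 1) ^ 2, X 1 * X 2, X 0 * X 1 * X 2, X 2]

open Finsupp

namespace MvPolynomial

variable {σ τ R : Type*} [CommRing R]

def binomialCon (I : Ideal (MvPolynomial σ R)) : AddCon (σ →₀ ℕ) where
  r a b := monomial a (1 : R) - monomial b 1 ∈ I
  iseqv :=
    { refl := fun a => by simp
      symm := fun h => by simpa using I.neg_mem h
      trans := fun h₁ h₂ => by simpa using I.add_mem h₁ h₂ }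
  add' {a b c d} h₁ h₂ := by
    have hsplit : monomial (a + c) (1 : R) - monomial (b + d) 1 =
        monomial c 1 * (monomial a 1 - monomial b 1) +
          monomial b 1 * (monomial c 1 - monomial d 1) := by
      simp only [mul_sub, monomial_mul, mul_one, add_comm c a, add_comm c b, sub_add_sub_cancel]
    simpa [hsplit] using I.add_mem (I.mul_mem_left _ h₁) (I.mul_mem_left _ h₂)

theorem binomialCon_apply {I : Ideal (MvPolynomial σ R)} {a b : σ →₀ ℕ} :
    binomialCon I a b ↔ monomial a (1 : R) - monomial b 1 ∈ I :=
  Iff.rfl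

theorem sub_mapDomain_mem {I : Ideal (MvPolynomial σ R)} {g : (σ →₀ ℕ) → σ →₀ ℕ}
    (hg : ∀ n, binomialCon I n (g n)) (f : MvPolynomial σ R) :
    f - AddMonoidAlgebra.mapDomain g f ∈ I := by
  induction f using MvPolynomial.induction_on' with
  | monomial n c =>
    have hmon : monomial n c - AddMonoidAlgebra.mapDomain g (monomial n c) =
        C c * (monomial n 1 - monomial (g n) 1) := by
      rw [mul_sub, C_mul_monomial, C_mul_monomial, mul_one, ← single_eq_monomial,
        AddMonoidAlgebra.mapDomain_single]
      rfl
    rw [hmon]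
    exact I.mul_mem_left _ (hg n)
  | add p q hp hq =>
    rw [AddMonoidAlgebra.mapDomain_add, add_sub_add_comm]
    exact I.add_mem hp hq

theorem aeval_monomial_eq_mapDomainAlgHom (e : σ → τ →₀ ℕ) :
    aeval (fun i => monomial (e i) (1 : R)) =
      AddMonoidAlgebra.mapDomainAlgHom R R (linearCombination ℕ e).toAddMonoidHom := by
  ext i : 1
  rw [aeval_X, X, ← single_eq_monomial, ← single_eq_monomial]
  simp

theorem ker_mapDomainAlgHom_eq_span {E : (σ →₀ ℕ) →+ (τ →₀ ℕ)}
    {S : Set ((σ →₀ ℕ) × (σ →₀ ℕ))} (hS : ∀ p ∈ S, E p.1 = E p.2) (D : (τ →₀ ℕ) → σ →₀ ℕ)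
    (hD : ∀ n, addConGen (fun a b => (a, b) ∈ S) n (D (E n))) :
    RingHom.ker (AddMonoidAlgebra.mapDomainAlgHom R R E) =
      Ideal.span ((fun p => monomial p.1 (1 : R) - monomial p.2 1) '' S) := by
  refine le_antisymm (fun f hf => ?_) (Ideal.span_le.2 ?_)
  · have hS_le : addConGen (fun a b => (a, b) ∈ S) ≤
        binomialCon (Ideal.span ((fun p => monomial p.1 (1 : R) - monomial p.2 1) '' S)) :=
      AddCon.addConGen_le.2 fun a b h => binomialCon_apply.2 <| Ideal.subset_span <|
        Set.mem_image_of_mem (fun p => monomial p.1 (1 : R) - monomial p.2 1) h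
    have hcomp : AddMonoidAlgebra.mapDomain (D ∘ E) f =
        AddMonoidAlgebra.mapDomain D (AddMonoidAlgebra.mapDomainAlgHom R R E f) := by
      simp only [AddMonoidAlgebra.mapDomainAlgHom_apply, AddMonoidAlgebra.mapDomain,
        AddMonoidAlgebra.coeff_ofCoeff, Finsupp.mapDomain_comp]
    have hmem := sub_mapDomain_mem (g := D ∘ E) (fun n => hS_le (hD n)) f
    rwa [hcomp, RingHom.mem_ker.1 hf, AddMonoidAlgebra.mapDomain_zero, sub_zero] at hmem
  · rintro _ ⟨p, hp, rfl⟩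
    rw [SetLike.mem_coe, RingHom.mem_ker, map_sub, ← single_eq_monomial, ← single_eq_monomial]
    simp [hS p hp]

end MvPolynomial

noncomputable def gammaExp : (Fin 6 →₀ ℕ) →ₗ[ℕ] Fin 3 →₀ ℕ :=
  linearCombination ℕ ![single 0 2, single 0 1 + single 2 1, single 1 2,
    single 1 1 + single 2 1, single 0 1 + single 1 1 + single 2 1, single 2 1]

theorem gammaExp_apply (n : Fin 6 →₀ ℕ) :
    gammaExp n = equivFunOnFinite.symm
      ![2 * n 0 + n 1 + n 4, 2 * n 2 + n 3 + n 4, n 1 + n 3 + n 4 + n 5] := by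
  ext i
  fin_cases i <;> simp [gammaExp, linearCombination_apply, sum_fintype, Fin.sum_univ_six] <;> ring

theorem gammaStar_eq_mapDomainAlgHom (k : Type*) [Field k] :
    gammaStar k = AddMonoidAlgebra.mapDomainAlgHom k k gammaExp.toAddMonoidHom := by
  rw [gammaStar, gammaExp, ← aeval_monomial_eq_mapDomainAlgHom]
  congr 1
  funext i
  fin_cases i <;> simp [X, monomial_mul, monomial_pow]

noncomputable def vwDegree : (Fin 6 →₀ ℕ) →+ ℕ :=
  weight ![0, 1, 0, 1, 1, 0]

theorem vwDegree_apply (n : Fin 6 →₀ ℕ) : vwDegree n = n 1 + n 3 + n 4 := by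
  simp [vwDegree, weight_apply, sum_fintype, Fin.sum_univ_six]

def gammaRelations : Set ((Fin 6 →₀ ℕ) × (Fin 6 →₀ ℕ)) :=
  {(single 1 2, single 0 1 + single 5 2), (single 3 2, single 2 1 + single 5 2),
    (single 4 1 + single 1 1, single 0 1 + single 3 1 + single 5 1),
    (single 4 1 + single 3 1, single 2 1 + single 1 1 + single 5 1),
    (single 1 1 + single 3 1, single 4 1 + single 5 1),
    (single 4 2, single 0 1 + single 2 1 + single 5 2)}

noncomputable abbrev gammaCon : AddCon (Fin 6 →₀ ℕ) :=
  addConGen fun a b => (a, b) ∈ gammaRelations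

theorem gammaExp_eq_of_mem_gammaRelations :
    ∀ p ∈ gammaRelations, gammaExp p.1 = gammaExp p.2 := by
  simp only [gammaRelations, Set.mem_insert_iff, Set.mem_singleton_iff, forall_eq_or_imp,
    forall_eq, gammaExp_apply]
  simp

theorem gammaExp_eq_of_gammaCon {a b : Fin 6 →₀ ℕ} (h : gammaCon a b) :
    gammaExp a = gammaExp b :=
  (AddCon.addConGen_le (c := AddCon.ker gammaExp.toAddMonoidHom)).2
    (fun a b hab => (AddCon.ker_rel _).2 (gammaExp_eq_of_mem_gammaRelations (a, b) hab)) h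

theorem vwDegree_lt_of_mem_gammaRelations :
    ∀ p ∈ gammaRelations, vwDegree p.2 < vwDegree p.1 := by
  simp only [gammaRelations, Set.mem_insert_iff, Set.mem_singleton_iff, forall_eq_or_imp,
    forall_eq, vwDegree_apply]
  simp

theorem exists_mem_gammaRelations_le {n : Fin 6 →₀ ℕ} (h : 2 ≤ vwDegree n) :
    ∃ p ∈ gammaRelations, p.1 ≤ n := by
  simp only [gammaRelations, Set.mem_insert_iff, Set.mem_singleton_iff, exists_eq_or_imp,
    exists_eq_left, le_def, Fin.forall_fin_succ]
  simp only [vwDegree_apply] at h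
  simp
  omega

/-- The exponent of degree at most one in `v₁, v₂, w` lying over `m`: which of `v₁, v₂, w`
occurs is read off from the parities of the exponents of `x₁` and `x₂`. -/
noncomputable def normalForm (m : Fin 3 →₀ ℕ) : Fin 6 →₀ ℕ :=
  equivFunOnFinite.symm
    ![m 0 / 2, (m 0 % 2 + (1 - m 1 % 2)) / 2, m 1 / 2, (m 1 % 2 + (1 - m 0 % 2)) / 2,
      (m 0 % 2 + m 1 % 2) / 2, m 2 - (m 0 % 2 + m 1 % 2 + 1) / 2]

theorem normalForm_gammaExp {n : Fin 6 →₀ ℕ} (h : vwDegree n ≤ 1) :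
    normalForm (gammaExp n) = n := by
  rw [vwDegree_apply] at h
  ext i
  fin_cases i <;> simp [normalForm, gammaExp_apply] <;> omega

theorem gammaCon_normalForm_gammaExp (n : Fin 6 →₀ ℕ) :
    gammaCon n (normalForm (gammaExp n)) := by
  induction h : vwDegree n using Nat.strong_induction_on generalizing n with
  | _ d ih =>
  subst h
  rcases le_or_gt (vwDegree n) 1 with hle | hlt
  · rw [normalForm_gammaExp hle]
    exact gammaCon.refl n
  obtain ⟨p, hp, hpn⟩ := exists_mem_gammaRelations_le hlt
  have hrel : gammaCon n (p.2 + (n - p.1)) := by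
    simpa [add_tsub_cancel_of_le hpn] using
      gammaCon.add (AddCon.le_addConGen _ _ hp) (gammaCon.refl (n - p.1))
  have hdeg : vwDegree (p.2 + (n - p.1)) < vwDegree n :=
    calc vwDegree (p.2 + (n - p.1)) = vwDegree p.2 + vwDegree (n - p.1) := map_add _ _ _
      _ < vwDegree p.1 + vwDegree (n - p.1) := by
        gcongr
        exact vwDegree_lt_of_mem_gammaRelations p hp
      _ = vwDegree n := by rw [← map_add, add_tsub_cancel_of_le hpn]
  refine gammaCon.trans hrel ?_
  rw [gammaExp_eq_of_gammaCon hrel]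
  exact ih _ hdeg _ rfl

theorem span_image_gammaRelations (k : Type*) [CommRing k] [CharP k 2] :
    Ideal.span ((fun p => monomial p.1 (1 : k) - monomial p.2 1) '' gammaRelations) =
      Ideal.span {
        X 0 * (X 5) ^ 2 + (X 1) ^ 2,
        X 2 * (X 5) ^ 2 + (X 3) ^ 2,
        X 4 * X 1 + X 0 * X 3 * X 5,
        X 4 * X 3 + X 2 * X 1 * X 5,
        X 1 * X 3 + X 4 * X 5,
        (X 4) ^ 2 + X 0 * X 2 * (X 5) ^ 2} := by
  simp only [gammaRelations, Set.image_insert_eq, Set.image_singleton, CharTwo.sub_eq_add, X,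
    monomial_mul, monomial_pow, smul_single, smul_eq_mul, mul_one, one_pow]
  rw [add_comm (monomial (single 1 2) 1), add_comm (monomial (single 3 2) 1)]

/-- In characteristic `2`, the kernel of `γ*` is generated by the six polynomials
`u₁y² + v₁²`, `u₂y² + v₂²`, `wv₁ + u₁v₂y`, `wv₂ + u₂v₁y`, `v₁v₂ + wy`,
`w² + u₁u₂y²`. -/
theorem ker_gammaStar {k : Type*} [Field k] [CharP k 2] :
    RingHom.ker (gammaStar k) =
      Ideal.span ({
        X 0 * (X 5) ^ 2 + (X 1) ^ 2,
        X 2 * (X 5) ^ 2 + (X 3) ^ 2,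
        X 4 * X 1 + X 0 * X 3 * X 5,
        X 4 * X 3 + X 2 * X 1 * X 5,
        X 1 * X 3 + X 4 * X 5,
        (X 4) ^ 2 + X 0 * X 2 * (X 5) ^ 2} : Set (MvPolynomial (Fin 6) k)) := by
  rw [gammaStar_eq_mapDomainAlgHom, ker_mapDomainAlgHom_eq_span (E := gammaExp.toAddMonoidHom)
    gammaExp_eq_of_mem_gammaRelations normalForm gammaCon_normalForm_gammaExp,
    span_image_gammaRelations]
end
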